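/- arXiv:1710.09251 — 2 statements merged into one kernel-verified Lean document; each statement's English description precedes it below -/
import Mathlib

section
/- Let A and B be rings, ${}_AP_B$ and ${}_BQ_A$ bimodules, and ν: P ⊗_B Q → A an A-A-bimodule homomorphism admitting an adjunction element. If some A-A-bimodule homomorphism φ: P ⊗_B Q → A is a split epimorphism of A-A-bimodules, then ν itself is a split epimorphism of A-A-bimodules. -/
/-! ### A balanced tensor product of a right module and a left module
over a possibly noncommutative ring, constructed as a quotient of the
`ℤ`-tensor product. -/

open MulOpposite
open scoped TensorProduct

section BalCore

variable (R : Type*) [Ring R] (M : Type*) [AddCommGroup M] [Module Rᵐᵒᵖ M]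
  (N : Type*) [AddCommGroup N] [Module R N]

/-- The subgroup of relations defining the balanced tensor product. -/
def balRel : Submodule ℤ (TensorProduct ℤ M N) :=
  Submodule.span ℤ {x | ∃ (m : M) (r : R) (n : N), x = (op r • m) ⊗ₜ[ℤ] n - m ⊗ₜ[ℤ] (r • n)}

/-- The balanced tensor product `M ⊗[R] N` of a right `R`-module `M` and a
left `R`-module `N`. -/
def Bal : Type _ := TensorProduct ℤ M N ⧸ balRel R M N

noncomputable instance : AddCommGroup (Bal R M N) := Submodule.Quotient.addCommGroup _

variable {M N}

/-- The canonical image of `m ⊗ n` in the balanced tensor product. -/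
noncomputable def Bal.tmul (m : M) (n : N) : Bal R M N := Submodule.Quotient.mk (m ⊗ₜ[ℤ] n)

theorem Bal.add_tmul (m m' : M) (n : N) :
    Bal.tmul R (m + m') n = Bal.tmul R m n + Bal.tmul R m' n := by
  show Submodule.Quotient.mk _ = _
  rw [TensorProduct.add_tmul]
  rfl

theorem Bal.tmul_add (m : M) (n n' : N) :
    Bal.tmul R m (n + n') = Bal.tmul R m n + Bal.tmul R m n' := by
  show Submodule.Quotient.mk _ = _
  rw [TensorProduct.tmul_add]
  rfl

theorem Bal.zero_tmul (n : N) : Bal.tmul R (0 : M) n = 0 := by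
  show Submodule.Quotient.mk _ = _
  rw [TensorProduct.zero_tmul]
  rfl

theorem Bal.tmul_zero (m : M) : Bal.tmul R m (0 : N) = 0 := by
  show Submodule.Quotient.mk _ = _
  rw [TensorProduct.tmul_zero]
  rfl

/-- The fundamental balancing relation `(m · r) ⊗ n = m ⊗ (r · n)`. -/
theorem Bal.op_smul_tmul (m : M) (r : R) (n : N) :
    Bal.tmul R (op r • m) n = Bal.tmul R m (r • n) :=
  (Submodule.Quotient.eq _).2 (Submodule.subset_span ⟨m, r, n, rfl⟩)

theorem Bal.induction_on {C : Bal R M N → Prop} (x : Bal R M N) (zero : C 0)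
    (tmul : ∀ m n, C (Bal.tmul R m n)) (add : ∀ x y, C x → C y → C (x + y)) : C x := by
  obtain ⟨y, rfl⟩ := Submodule.Quotient.mk_surjective _ x
  induction y using TensorProduct.induction_on with
  | zero => exact zero
  | tmul m n => exact tmul m n
  | add a b ha hb =>
      have : (Submodule.Quotient.mk (a + b) : Bal R M N)
          = Submodule.Quotient.mk a + Submodule.Quotient.mk b := rfl
      rw [this]; exact add _ _ ha hb

/-- Lift a balanced biadditive map to the balanced tensor product. -/
noncomputable def Bal.liftFun {T : Type*} [AddCommGroup T] (f : M → N → T)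
    (h1 : ∀ m m' n, f (m + m') n = f m n + f m' n)
    (h2 : ∀ m n n', f m (n + n') = f m n + f m n')
    (h3 : ∀ (m : M) (r : R) (n : N), f (op r • m) n = f m (r • n)) : Bal R M N →+ T :=
  letI f₂ : M →+ N →+ T :=
    AddMonoidHom.mk' (fun m => AddMonoidHom.mk' (f m) (h2 m))
      (fun m m' => AddMonoidHom.ext fun n => h1 m m' n)
  letI bil : M →ₗ[ℤ] N →ₗ[ℤ] T :=
    { toFun := fun m => (f₂ m).toIntLinearMap
      map_add' := fun m m' => LinearMap.ext fun n => by simp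
      map_smul' := fun z m => LinearMap.ext fun n => by
        simp [map_zsmul] }
  ((balRel R M N).liftQ (TensorProduct.lift bil) (by
    rw [balRel, Submodule.span_le]
    rintro x ⟨m, r, n, rfl⟩
    change TensorProduct.lift bil ((op r • m) ⊗ₜ[ℤ] n - m ⊗ₜ[ℤ] (r • n)) = 0
    rw [map_sub, TensorProduct.lift.tmul, TensorProduct.lift.tmul]
    simp [bil, f₂, h3 m r n])).toAddMonoidHom

@[simp] theorem Bal.liftFun_tmul {T : Type*} [AddCommGroup T] (f : M → N → T)
    (h1 : ∀ m m' n, f (m + m') n = f m n + f m' n)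
    (h2 : ∀ m n n', f m (n + n') = f m n + f m n')
    (h3 : ∀ (m : M) (r : R) (n : N), f (op r • m) n = f m (r • n)) (m : M) (n : N) :
    Bal.liftFun R f h1 h2 h3 (Bal.tmul R m n) = f m n := by
  simp [Bal.liftFun, Bal.tmul, Submodule.Quotient.mk]
  rfl

theorem Bal.addHom_ext {T : Type*} [AddCommGroup T] {f g : Bal R M N →+ T}
    (h : ∀ m n, f (Bal.tmul R m n) = g (Bal.tmul R m n)) : f = g := by
  ext x
  refine Bal.induction_on R (C := fun z => f z = g z) x (by simp) h
    (fun x y hx hy => by simp only [map_add]; rw [hx, hy])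

end BalCore
section BalModule

variable (R : Type*) [Ring R] {M : Type*} [AddCommGroup M] [Module Rᵐᵒᵖ M]
  {N : Type*} [AddCommGroup N] [Module R N]

section Left

variable {S : Type*} [Ring S] [Module S M] [SMulCommClass S Rᵐᵒᵖ M]

/-- The left action on the balanced tensor product through the first factor. -/
noncomputable def Bal.lsmulHom (s : S) : Bal R M N →+ Bal R M N :=
  Bal.liftFun R (fun m n => Bal.tmul R (s • m) n)
    (fun m m' n => by
      show Bal.tmul R (s • (m + m')) n = Bal.tmul R (s • m) n + Bal.tmul R (s • m') n
      rw [smul_add, Bal.add_tmul])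
    (fun m n n' => Bal.tmul_add R _ n n')
    (fun m r n => by
      show Bal.tmul R (s • op r • m) n = Bal.tmul R (s • m) (r • n)
      rw [smul_comm, Bal.op_smul_tmul])

theorem Bal.lsmulHom_tmul (s : S) (m : M) (n : N) :
    Bal.lsmulHom R (M := M) (N := N) s (Bal.tmul R m n) = Bal.tmul R (s • m) n :=
  Bal.liftFun_tmul R _ _ _ _ m n

noncomputable instance : SMul S (Bal R M N) := ⟨fun s x => Bal.lsmulHom R s x⟩

theorem Bal.lsmul_tmul (s : S) (m : M) (n : N) :
    s • Bal.tmul R m n = Bal.tmul R (s • m) n :=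
  Bal.lsmulHom_tmul R s m n

theorem Bal.lsmul_one : Bal.lsmulHom R (M := M) (N := N) (1 : S) = AddMonoidHom.id _ :=
  Bal.addHom_ext R fun m n => by
    rw [Bal.lsmulHom_tmul, one_smul, AddMonoidHom.id_apply]

theorem Bal.lsmul_mul (s t : S) :
    Bal.lsmulHom R (M := M) (N := N) (s * t) = (Bal.lsmulHom R s).comp (Bal.lsmulHom R t) :=
  Bal.addHom_ext R fun m n => by
    rw [AddMonoidHom.comp_apply, Bal.lsmulHom_tmul, Bal.lsmulHom_tmul, Bal.lsmulHom_tmul,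
      mul_smul]

theorem Bal.lsmul_addsmul (s t : S) :
    Bal.lsmulHom R (M := M) (N := N) (s + t) = Bal.lsmulHom R s + Bal.lsmulHom R t :=
  Bal.addHom_ext R fun m n => by
    rw [AddMonoidHom.add_apply, Bal.lsmulHom_tmul, Bal.lsmulHom_tmul, Bal.lsmulHom_tmul,
      add_smul, Bal.add_tmul]

theorem Bal.lsmul_zerosmul : Bal.lsmulHom R (M := M) (N := N) (0 : S) = 0 :=
  Bal.addHom_ext R fun m n => by
    rw [Bal.lsmulHom_tmul, zero_smul, Bal.zero_tmul, AddMonoidHom.zero_apply]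

noncomputable instance : Module S (Bal R M N) where
  one_smul x := DFunLike.congr_fun (Bal.lsmul_one R (M := M) (N := N) (S := S)) x
  mul_smul s t x := DFunLike.congr_fun (Bal.lsmul_mul R s t) x
  smul_zero s := (Bal.lsmulHom R (M := M) (N := N) s).map_zero
  smul_add s x y := (Bal.lsmulHom R s).map_add x y
  add_smul s t x := DFunLike.congr_fun (Bal.lsmul_addsmul R s t) x
  zero_smul x := DFunLike.congr_fun (Bal.lsmul_zerosmul R (M := M) (N := N) (S := S)) x

end Left

section Right

variable {S : Type*} [Ring S] [Module Sᵐᵒᵖ N] [SMulCommClass R Sᵐᵒᵖ N]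

/-- The right action on the balanced tensor product through the second factor. -/
noncomputable def Bal.rsmulHom (s : Sᵐᵒᵖ) : Bal R M N →+ Bal R M N :=
  Bal.liftFun R (fun m n => Bal.tmul R m (s • n))
    (fun m m' n => Bal.add_tmul R m m' _)
    (fun m n n' => by
      show Bal.tmul R m (s • (n + n')) = Bal.tmul R m (s • n) + Bal.tmul R m (s • n')
      rw [smul_add, Bal.tmul_add])
    (fun m r n => by
      show Bal.tmul R (op r • m) (s • n) = Bal.tmul R m (s • r • n)
      rw [Bal.op_smul_tmul, smul_comm])

theorem Bal.rsmulHom_tmul (s : Sᵐᵒᵖ) (m : M) (n : N) :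
    Bal.rsmulHom R (M := M) (N := N) s (Bal.tmul R m n) = Bal.tmul R m (s • n) :=
  Bal.liftFun_tmul R _ _ _ _ m n

noncomputable instance : SMul Sᵐᵒᵖ (Bal R M N) := ⟨fun s x => Bal.rsmulHom R s x⟩

theorem Bal.rsmul_tmul (s : Sᵐᵒᵖ) (m : M) (n : N) :
    s • Bal.tmul R m n = Bal.tmul R m (s • n) :=
  Bal.rsmulHom_tmul R s m n

theorem Bal.rsmul_one : Bal.rsmulHom R (M := M) (N := N) (1 : Sᵐᵒᵖ) = AddMonoidHom.id _ :=
  Bal.addHom_ext R fun m n => by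
    rw [Bal.rsmulHom_tmul, one_smul, AddMonoidHom.id_apply]

theorem Bal.rsmul_mul (s t : Sᵐᵒᵖ) :
    Bal.rsmulHom R (M := M) (N := N) (s * t) = (Bal.rsmulHom R s).comp (Bal.rsmulHom R t) :=
  Bal.addHom_ext R fun m n => by
    rw [AddMonoidHom.comp_apply, Bal.rsmulHom_tmul, Bal.rsmulHom_tmul, Bal.rsmulHom_tmul,
      mul_smul]

theorem Bal.rsmul_addsmul (s t : Sᵐᵒᵖ) :
    Bal.rsmulHom R (M := M) (N := N) (s + t) = Bal.rsmulHom R s + Bal.rsmulHom R t :=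
  Bal.addHom_ext R fun m n => by
    rw [AddMonoidHom.add_apply, Bal.rsmulHom_tmul, Bal.rsmulHom_tmul, Bal.rsmulHom_tmul,
      add_smul, Bal.tmul_add]

theorem Bal.rsmul_zerosmul : Bal.rsmulHom R (M := M) (N := N) (0 : Sᵐᵒᵖ) = 0 :=
  Bal.addHom_ext R fun m n => by
    rw [Bal.rsmulHom_tmul, zero_smul, Bal.tmul_zero, AddMonoidHom.zero_apply]

noncomputable instance : Module Sᵐᵒᵖ (Bal R M N) where
  one_smul x := DFunLike.congr_fun (Bal.rsmul_one R (M := M) (N := N) (S := S)) x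
  mul_smul s t x := DFunLike.congr_fun (Bal.rsmul_mul R s t) x
  smul_zero s := (Bal.rsmulHom R (M := M) (N := N) s).map_zero
  smul_add s x y := (Bal.rsmulHom R s).map_add x y
  add_smul s t x := DFunLike.congr_fun (Bal.rsmul_addsmul R s t) x
  zero_smul x := DFunLike.congr_fun (Bal.rsmul_zerosmul R (M := M) (N := N) (S := S)) x

end Right

end BalModule

/-! With the adjunction element `∑ q'ᵢ ⊗ p'ᵢ`, every pairing `φ : P ⊗[B] Q → A` factors
as `φ = ν ∘ (id ⊗ f)` for the `B`-`A`-endomorphism `f q = ∑ q'ᵢ · φ (p'ᵢ ⊗ q)` of `Q`.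
If `φ` is bimodule-linear, so is `id ⊗ f`, and composing it with a section of `φ`
gives a section of `ν`. -/

namespace Bal

section Sums

variable (R : Type*) [Ring R] {M : Type*} [AddCommGroup M] [Module Rᵐᵒᵖ M]
  {N : Type*} [AddCommGroup N] [Module R N] {ι : Type*}

theorem tmul_sum (m : M) (s : Finset ι) (f : ι → N) :
    tmul R m (∑ i ∈ s, f i) = ∑ i ∈ s, tmul R m (f i) :=
  map_sum (AddMonoidHom.mk' (tmul R m) (tmul_add R m)) f s

theorem sum_tmul (s : Finset ι) (f : ι → M) (n : N) :
    tmul R (∑ i ∈ s, f i) n = ∑ i ∈ s, tmul R (f i) n :=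
  map_sum (AddMonoidHom.mk' (tmul R · n) (add_tmul R · · n)) f s

end Sums

section LTensor

variable (R : Type*) [Ring R] {M : Type*} [AddCommGroup M] [Module Rᵐᵒᵖ M]
  {N N' : Type*} [AddCommGroup N] [Module R N] [AddCommGroup N'] [Module R N']
  (f : N →+ N') (hf : ∀ (r : R) (n : N), f (r • n) = r • f n)

noncomputable def lTensor : Bal R M N →+ Bal R M N' :=
  liftFun R (fun m n => tmul R m (f n))
    (fun m m' n => add_tmul R m m' (f n))
    (fun m n n' => by simp only [map_add, tmul_add])
    (fun m r n => by simp only [hf, op_smul_tmul])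

theorem lTensor_tmul (m : M) (n : N) : lTensor R f hf (tmul R m n) = tmul R m (f n) :=
  liftFun_tmul R _ _ _ _ m n

theorem lTensor_smul {S : Type*} [Ring S] [Module S M] [SMulCommClass S Rᵐᵒᵖ M]
    (s : S) (x : Bal R M N) : lTensor R f hf (s • x) = s • lTensor R f hf x :=
  DFunLike.congr_fun (addHom_ext R (f := (lTensor R f hf).comp (lsmulHom R s))
    (g := (lsmulHom R s).comp (lTensor R f hf)) fun m n => by
      simp only [AddMonoidHom.comp_apply, lsmulHom_tmul, lTensor_tmul]) x

theorem lTensor_op_smul {S : Type*} [Ring S] [Module Sᵐᵒᵖ N] [SMulCommClass R Sᵐᵒᵖ N]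
    [Module Sᵐᵒᵖ N'] [SMulCommClass R Sᵐᵒᵖ N'] (hfS : ∀ (s : Sᵐᵒᵖ) (n : N), f (s • n) = s • f n)
    (s : Sᵐᵒᵖ) (x : Bal R M N) : lTensor R f hf (s • x) = s • lTensor R f hf x :=
  DFunLike.congr_fun (addHom_ext R (f := (lTensor R f hf).comp (rsmulHom R s))
    (g := (rsmulHom R s).comp (lTensor R f hf)) fun m n => by
      simp only [AddMonoidHom.comp_apply, rsmulHom_tmul, lTensor_tmul, hfS]) x

end LTensor

section Pairing

variable {A B P Q : Type*} [Ring A] [Ring B] [AddCommGroup P] [Module Bᵐᵒᵖ P]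
  [AddCommGroup Q] [Module B Q] [Module Aᵐᵒᵖ Q]
  {ι : Type*} [Fintype ι] (ν φ : Bal B P Q →+ A) (q' : ι → Q) (p' : ι → P)

theorem eq_of_forall_tmul_eq (adj2 : ∀ q : Q, ∑ i, op (ν (tmul B (p' i) q)) • q' i = q)
    {q₁ q₂ : Q} (h : ∀ p : P, ν (tmul B p q₁) = ν (tmul B p q₂)) : q₁ = q₂ := by
  rw [← adj2 q₁, ← adj2 q₂]
  simp only [h]

noncomputable def endOfPairing : Q →+ Q :=
  AddMonoidHom.mk' (fun q => ∑ i, op (φ (tmul B (p' i) q)) • q' i) fun q₁ q₂ => by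
    simp only [tmul_add, map_add, op_add, add_smul, Finset.sum_add_distrib]

theorem endOfPairing_apply (q : Q) :
    endOfPairing φ q' p' q = ∑ i, op (φ (tmul B (p' i) q)) • q' i :=
  rfl

variable {ν φ q' p'} [SMulCommClass B Aᵐᵒᵖ Q]

theorem endOfPairing_op_smul (hφr : ∀ (a : A) (x : Bal B P Q), φ (op a • x) = φ x * a)
    (a : A) (q : Q) : endOfPairing φ q' p' (op a • q) = op a • endOfPairing φ q' p' q := by
  simp only [endOfPairing_apply, Finset.smul_sum, ← rsmul_tmul, hφr, op_mul, mul_smul]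

variable [Module A P] [SMulCommClass A Bᵐᵒᵖ P]

theorem apply_tmul_endOfPairing (hνr : ∀ (a : A) (x : Bal B P Q), ν (op a • x) = ν x * a)
    (adj1 : ∀ p : P, ∑ i, ν (tmul B p (q' i)) • p' i = p)
    (hφl : ∀ (a : A) (x : Bal B P Q), φ (a • x) = a * φ x) (p : P) (q : Q) :
    ν (tmul B p (endOfPairing φ q' p' q)) = φ (tmul B p q) :=
  calc ν (tmul B p (endOfPairing φ q' p' q))
      = ∑ i, ν (op (φ (tmul B (p' i) q)) • tmul B p (q' i)) := by
        simp only [endOfPairing_apply, tmul_sum, rsmul_tmul, map_sum]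
    _ = ∑ i, φ (ν (tmul B p (q' i)) • tmul B (p' i) q) := by
        simp only [hνr, hφl]
    _ = φ (tmul B p q) := by
        simp only [lsmul_tmul, ← map_sum, ← sum_tmul, adj1]

theorem endOfPairing_smul (hνr : ∀ (a : A) (x : Bal B P Q), ν (op a • x) = ν x * a)
    (adj1 : ∀ p : P, ∑ i, ν (tmul B p (q' i)) • p' i = p)
    (adj2 : ∀ q : Q, ∑ i, op (ν (tmul B (p' i) q)) • q' i = q)
    (hφl : ∀ (a : A) (x : Bal B P Q), φ (a • x) = a * φ x) (b : B) (q : Q) :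
    endOfPairing φ q' p' (b • q) = b • endOfPairing φ q' p' q :=
  eq_of_forall_tmul_eq ν q' p' adj2 fun p => by
    rw [apply_tmul_endOfPairing hνr adj1 hφl, ← op_smul_tmul, ← op_smul_tmul,
      apply_tmul_endOfPairing hνr adj1 hφl]

end Pairing

end Bal

theorem counit_split_epi_of_some_split_epi_general
    {A B P Q : Type*} [Ring A] [Ring B]
    [AddCommGroup P] [Module A P] [Module Bᵐᵒᵖ P] [SMulCommClass A Bᵐᵒᵖ P]
    [AddCommGroup Q] [Module B Q] [Module Aᵐᵒᵖ Q] [SMulCommClass B Aᵐᵒᵖ Q]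
    (ν : Bal B P Q →+ A)
    (hνr : ∀ (a : A) (x : Bal B P Q), ν (op a • x) = ν x * a)
    (n : ℕ) (q' : Fin n → Q) (p' : Fin n → P)
    (adj1 : ∀ p : P, ∑ i, ν (Bal.tmul B p (q' i)) • p' i = p)
    (adj2 : ∀ q : Q, ∑ i, op (ν (Bal.tmul B (p' i) q)) • q' i = q)
    (φ : Bal B P Q →+ A)
    (hφl : ∀ (a : A) (x : Bal B P Q), φ (a • x) = a * φ x)
    (hφr : ∀ (a : A) (x : Bal B P Q), φ (op a • x) = φ x * a)
    (hφsplit : ∃ σ : A →+ Bal B P Q,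
      (∀ (a c : A), σ (a * c) = a • σ c) ∧ (∀ (a c : A), σ (c * a) = op a • σ c) ∧
      ∀ a : A, φ (σ a) = a) :
    ∃ σ : A →+ Bal B P Q,
      (∀ (a c : A), σ (a * c) = a • σ c) ∧ (∀ (a c : A), σ (c * a) = op a • σ c) ∧
      ∀ a : A, ν (σ a) = a := by
  obtain ⟨σ, hσl, hσr, hφσ⟩ := hφsplit
  let g := Bal.lTensor B (M := P) (Bal.endOfPairing φ q' p')
    (Bal.endOfPairing_smul hνr adj1 adj2 hφl)
  have hνg : ν.comp g = φ := Bal.addHom_ext B fun p q => by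
    rw [AddMonoidHom.comp_apply, Bal.lTensor_tmul, Bal.apply_tmul_endOfPairing hνr adj1 hφl]
  refine ⟨g.comp σ, fun a c => ?_, fun a c => ?_, fun a => ?_⟩
  · rw [AddMonoidHom.comp_apply, hσl]
    exact Bal.lTensor_smul B _ _ a (σ c)
  · rw [AddMonoidHom.comp_apply, hσr]
    exact Bal.lTensor_op_smul B _ _ (fun a => Bal.endOfPairing_op_smul hφr a.unop) (op a) (σ c)
  · exact (DFunLike.congr_fun hνg (σ a)).trans (hφσ a)

/-- Suppose `ν : P ⊗[B] Q → A` is an `A`-`A`-bimodule homomorphism that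
admits an adjunction element.  If some `A`-`A`-bimodule homomorphism `φ : P ⊗[B] Q → A` is
a split epimorphism of `A`-`A`-bimodules, then `ν` itself is a split epimorphism of
`A`-`A`-bimodules. -/
theorem counit_split_epi_of_some_split_epi
    {A B P Q : Type*} [Ring A] [Ring B]
    [AddCommGroup P] [Module A P] [Module Bᵐᵒᵖ P] [SMulCommClass A Bᵐᵒᵖ P]
    [AddCommGroup Q] [Module B Q] [Module Aᵐᵒᵖ Q] [SMulCommClass B Aᵐᵒᵖ Q]
    (ν : Bal B P Q →+ A)
    (hνl : ∀ (a : A) (x : Bal B P Q), ν (a • x) = a * ν x)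
    (hνr : ∀ (a : A) (x : Bal B P Q), ν (op a • x) = ν x * a)
    (n : ℕ) (q' : Fin n → Q) (p' : Fin n → P)
    (adj1 : ∀ p : P, ∑ i, ν (Bal.tmul B p (q' i)) • p' i = p)
    (adj2 : ∀ q : Q, ∑ i, op (ν (Bal.tmul B (p' i) q)) • q' i = q)
    (φ : Bal B P Q →+ A)
    (hφl : ∀ (a : A) (x : Bal B P Q), φ (a • x) = a * φ x)
    (hφr : ∀ (a : A) (x : Bal B P Q), φ (op a • x) = φ x * a)
    (hφsplit : ∃ σ : A →+ Bal B P Q,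
      (∀ (a c : A), σ (a * c) = a • σ c) ∧ (∀ (a c : A), σ (c * a) = op a • σ c) ∧
      ∀ a : A, φ (σ a) = a) :
    ∃ σ : A →+ Bal B P Q,
      (∀ (a c : A), σ (a * c) = a • σ c) ∧ (∀ (a c : A), σ (c * a) = op a • σ c) ∧
      ∀ a : A, ν (σ a) = a :=
  counit_split_epi_of_some_split_epi_general ν hνr n q' p' adj1 adj2 φ hφl hφr hφsplit
end

section
/- Let k be a field and let A and B be finite-dimensional symmetric k-algebras. Then every bimodule ${}_AP_B$ on which k acts centrally and which is left and right finite projective satisfies Hom_B(P_B, B_B) ≅ Hom_A({}_AP, {}_AA) as B-A-bimodules; that is, P is automatically a Frobenius bimodule. -/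
/-! ### A balanced tensor product of a right module and a left module
over a possibly noncommutative ring, constructed as a quotient of the
`ℤ`-tensor product. -/

open MulOpposite
open scoped TensorProduct

section HomBimodule

variable {A B P Q : Type*} [Ring A] [Ring B]
  [AddCommGroup P] [Module A P] [Module Bᵐᵒᵖ P] [SMulCommClass A Bᵐᵒᵖ P]
  [AddCommGroup Q] [Module B Q] [Module Aᵐᵒᵖ Q] [SMulCommClass B Aᵐᵒᵖ Q]

/-- Right multiplication by `b` as a left `A`-module endomorphism of `P`. -/
noncomputable def rmulLinear (b : B) : P →ₗ[A] P where
  toFun p := op b • p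
  map_add' := smul_add (op b)
  map_smul' a p := (smul_comm a (op b) p).symm

/-- Left multiplication by `a` as a right `B`-module endomorphism of `P`. -/
noncomputable def lmulLinear (a : A) : P →ₗ[Bᵐᵒᵖ] P where
  toFun p := a • p
  map_add' := smul_add a
  map_smul' b p := smul_comm a b p

/-- The right `A`-action (through the domain) on `Hom_B(P_B, B_B)`:
`(f · a) p = f (a • p)`. -/
noncomputable instance : Module Aᵐᵒᵖ (P →ₗ[Bᵐᵒᵖ] B) where
  smul a f := f.comp (lmulLinear a.unop)
  one_smul f := LinearMap.ext fun p => by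
    show f ((1 : Aᵐᵒᵖ).unop • p) = f p
    rw [unop_one, one_smul]
  mul_smul a a' f := LinearMap.ext fun p => by
    show f ((a * a').unop • p) = f (a'.unop • a.unop • p)
    rw [MulOpposite.unop_mul, mul_smul]
  smul_zero a := LinearMap.ext fun p => rfl
  smul_add a f g := LinearMap.ext fun p => rfl
  add_smul a a' f := LinearMap.ext fun p => by
    show f ((a + a').unop • p) = f (a.unop • p) + f (a'.unop • p)
    rw [MulOpposite.unop_add, add_smul, map_add]
  zero_smul f := LinearMap.ext fun p => by
    show f ((0 : Aᵐᵒᵖ).unop • p) = 0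
    rw [MulOpposite.unop_zero, zero_smul, map_zero]

theorem opSmul_homBB_apply (a : A) (f : P →ₗ[Bᵐᵒᵖ] B) (p : P) :
    (op a • f) p = f (a • p) := rfl

/-- The left `B`-action (through the domain) on `Hom_A({}_A P, {}_A A)`:
`(b · f) p = f (p · b)`. -/
noncomputable instance : Module B (P →ₗ[A] A) where
  smul b f := f.comp (rmulLinear b)
  one_smul f := LinearMap.ext fun p => by
    show f (op (1 : B) • p) = f p
    rw [op_one, one_smul]
  mul_smul b b' f := LinearMap.ext fun p => by
    show f (op (b * b') • p) = f (op b' • op b • p)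
    rw [op_mul, mul_smul]
  smul_zero b := LinearMap.ext fun p => rfl
  smul_add b f g := LinearMap.ext fun p => rfl
  add_smul b b' f := LinearMap.ext fun p => by
    show f (op (b + b') • p) = f (op b • p) + f (op b' • p)
    rw [op_add, add_smul, map_add]
  zero_smul f := LinearMap.ext fun p => by
    show f (op (0 : B) • p) = 0
    rw [op_zero, zero_smul, map_zero]

theorem smul_homAA_apply (b : B) (f : P →ₗ[A] A) (p : P) :
    (b • f) p = f (op b • p) := rfl

noncomputable instance : SMulCommClass B Aᵐᵒᵖ (P →ₗ[A] A) :=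
  ⟨fun _ _ _ => LinearMap.ext fun _ => rfl⟩

noncomputable instance : SMulCommClass B Aᵐᵒᵖ (P →ₗ[Bᵐᵒᵖ] B) :=
  ⟨fun _ _ _ => LinearMap.ext fun _ => rfl⟩

/-- The map `Q → Hom_A({}_A P, {}_A A)`, `q ↦ ν(- ⊗ q)`. -/
noncomputable def nuDual (ν : Bal B P Q →+ A)
    (hνl : ∀ (a : A) (x : Bal B P Q), ν (a • x) = a * ν x) (q : Q) : P →ₗ[A] A where
  toFun p := ν (Bal.tmul B p q)
  map_add' p p' := by
    show ν (Bal.tmul B (p + p') q) = ν (Bal.tmul B p q) + ν (Bal.tmul B p' q)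
    rw [Bal.add_tmul, map_add]
  map_smul' a p := by
    show ν (Bal.tmul B (a • p) q) = a • ν (Bal.tmul B p q)
    rw [← Bal.lsmul_tmul, hνl, smul_eq_mul]

@[simp] theorem nuDual_apply (ν : Bal B P Q →+ A)
    (hνl : ∀ (a : A) (x : Bal B P Q), ν (a • x) = a * ν x) (q : Q) (p : P) :
    nuDual ν hνl q p = ν (Bal.tmul B p q) := rfl

/-- The map `Q → Hom_B(P_B, B_B)`, `q ↦ μ(q ⊗ -)`. -/
noncomputable def muDual (μ : Bal A Q P →+ B)
    (hμr : ∀ (b : B) (y : Bal A Q P), μ (op b • y) = μ y * b) (q : Q) : P →ₗ[Bᵐᵒᵖ] B where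
  toFun p := μ (Bal.tmul A q p)
  map_add' p p' := by
    show μ (Bal.tmul A q (p + p')) = μ (Bal.tmul A q p) + μ (Bal.tmul A q p')
    rw [Bal.tmul_add, map_add]
  map_smul' b p := by
    show μ (Bal.tmul A q (b • p)) = b • μ (Bal.tmul A q p)
    rw [← Bal.rsmul_tmul, MulOpposite.smul_eq_mul_unop]
    conv_lhs => rw [← MulOpposite.op_unop b]
    rw [hμr]

@[simp] theorem muDual_apply (μ : Bal A Q P →+ B)
    (hμr : ∀ (b : B) (y : Bal A Q P), μ (op b • y) = μ y * b) (q : Q) (p : P) :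
    muDual μ hμr q p = μ (Bal.tmul A q p) := rfl

end HomBimodule

/-! For a symmetric algebra `R` with trace `τ = φ 1`, the map `m ↦ τ (· * m)` identifies `R`
with `Hom_k(R, k)` as a left `R`-module, so by the tensor-hom adjunction
`Hom_R(P, R) ≅ Hom_R(P, Hom_k(R, k)) ≅ Hom_k(P, k)`, `g ↦ τ ∘ g`, for every `R`-module `P`.
Applied to `A` acting on the left of `P` and to `B` acting on the right, this gives
`Hom_B(P_B, B_B) ≅ Hom_k(P, k) ≅ Hom_A(_AP, _AA)`, and symmetry of the two traces makes the
composite a map of `B`-`A`-bimodules. -/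

/-- `τ` identifies `M` with the coinduced module `Hom_k(R, k)` via `m ↦ (r ↦ τ (r • m))`. -/
def IsFrobeniusForm (R : Type*) {k M : Type*} [CommSemiring k] [Semiring R] [Module k R]
    [AddCommMonoid M] [Module R M] [Module k M] (τ : M →ₗ[k] k) : Prop :=
  ∀ l : Module.Dual k R, ∃! m : M, ∀ r : R, τ (r • m) = l r

section TraceComp

variable {k R M P : Type*} [CommSemiring k] [Semiring R] [Module k R]
  [AddCommMonoid M] [Module R M] [Module k M]
  [AddCommMonoid P] [Module R P] [Module k P] [IsScalarTower k R P]

theorem IsFrobeniusForm.existsUnique_smul_eq {τ : M →ₗ[k] k} (hτ : IsFrobeniusForm R τ)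
    (l : Module.Dual k P) (p : P) :
    ∃! m : M, ∀ r : R, τ (r • m) = l (r • p) :=
  hτ (l ∘ₗ (LinearMap.toSpanSingleton R P p).restrictScalars k)

variable [IsScalarTower k R M]

noncomputable def traceComp (τ : M →ₗ[k] k) : (P →ₗ[R] M) →+ Module.Dual k P where
  toFun g := τ ∘ₗ g.restrictScalars k
  map_zero' := by ext; simp
  map_add' g g' := by ext; simp

@[simp] theorem traceComp_apply (τ : M →ₗ[k] k) (g : P →ₗ[R] M) (p : P) :
    traceComp τ g p = τ (g p) := rfl

theorem traceComp_injective {τ : M →ₗ[k] k} (hτ : IsFrobeniusForm R τ) :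
    Function.Injective (traceComp (R := R) (P := P) τ) := by
  intro g g' h
  ext p
  refine (hτ.existsUnique_smul_eq (traceComp τ g') p).unique (fun r => ?_) (fun r => ?_)
  · rw [← h, traceComp_apply, map_smul g]
  · rw [traceComp_apply, map_smul g']

theorem traceComp_surjective {τ : M →ₗ[k] k} (hτ : IsFrobeniusForm R τ) :
    Function.Surjective (traceComp (R := R) (P := P) τ) := by
  intro l
  choose g hg huniq using hτ.existsUnique_smul_eq l
  refine ⟨{ toFun := g, map_add' := fun p p' => ?_, map_smul' := fun s p => ?_ }, ?_⟩
  · exact (huniq _ _ fun r => by rw [smul_add, map_add, hg, hg, smul_add, map_add]).symm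
  · exact (huniq _ _ fun r => by rw [RingHom.id_apply, smul_smul, hg, smul_smul]).symm
  · ext p
    simpa using hg p 1

noncomputable def traceCompEquiv {τ : M →ₗ[k] k} (hτ : IsFrobeniusForm R τ) :
    (P →ₗ[R] M) ≃+ Module.Dual k P :=
  AddEquiv.ofBijective (traceComp τ) ⟨traceComp_injective hτ, traceComp_surjective hτ⟩

end TraceComp

section SymmetricAlgebra

variable {k R : Type*} [CommSemiring k] [Semiring R] [Module k R]
  {φ : R →ₗ[k] Module.Dual k R}

theorem apply_eq_one_apply_mul_left (hφ : ∀ a x y : R, φ (a * x) y = φ x (y * a)) (a y : R) :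
    φ a y = φ 1 (y * a) := by
  rw [← hφ, mul_one]

theorem apply_eq_one_apply_mul_right (hφ : ∀ a x y : R, φ (x * a) y = φ x (a * y)) (a y : R) :
    φ a y = φ 1 (a * y) := by
  rw [← hφ, one_mul]

theorem one_apply_mul_comm (hφ₁ : ∀ a x y : R, φ (a * x) y = φ x (y * a))
    (hφ₂ : ∀ a x y : R, φ (x * a) y = φ x (a * y)) (x y : R) :
    φ 1 (x * y) = φ 1 (y * x) := by
  rw [← apply_eq_one_apply_mul_right hφ₂, apply_eq_one_apply_mul_left hφ₁]

theorem isFrobeniusForm_apply_one (hbij : Function.Bijective φ)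
    (hφ : ∀ a x y : R, φ (a * x) y = φ x (y * a)) : IsFrobeniusForm R (φ 1) := by
  intro l
  simp_rw [smul_eq_mul, ← apply_eq_one_apply_mul_left hφ, ← LinearMap.ext_iff]
  exact hbij.existsUnique l

theorem isFrobeniusForm_op_apply_one (hbij : Function.Bijective φ)
    (hφ : ∀ a x y : R, φ (x * a) y = φ x (a * y)) : IsFrobeniusForm Rᵐᵒᵖ (φ 1) := by
  intro l
  have hop :
      Function.Bijective fun m => φ m ∘ₗ (MulOpposite.opLinearEquiv k).symm.toLinearMap :=
    (MulOpposite.opLinearEquiv k).symm.dualMap.bijective.comp hbij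
  simp_rw [MulOpposite.smul_eq_mul_unop, ← apply_eq_one_apply_mul_right hφ]
  simpa only [LinearMap.ext_iff, LinearMap.coe_comp, LinearEquiv.coe_coe, coe_opLinearEquiv_symm,
    Function.comp_apply] using hop.existsUnique l

end SymmetricAlgebra

theorem bimodule_over_symmetric_algebras_is_frobenius_general
    {k A B P : Type*} [Field k] [Ring A] [Algebra k A] [Ring B] [Algebra k B]
    -- `A` is a symmetric algebra: `A ≅ A* = Hom_k(A, k)` as `A`-`A`-bimodules
    (hA : ∃ φ : A →ₗ[k] Module.Dual k A, Function.Bijective φ ∧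
      (∀ a x y : A, φ (a * x) y = φ x (y * a)) ∧
      (∀ a x y : A, φ (x * a) y = φ x (a * y)))
    -- `B` is a symmetric algebra
    (hB : ∃ ψ : B →ₗ[k] Module.Dual k B, Function.Bijective ψ ∧
      (∀ b x y : B, ψ (b * x) y = ψ x (y * b)) ∧
      (∀ b x y : B, ψ (x * b) y = ψ x (b * y)))
    [AddCommGroup P] [Module A P] [Module Bᵐᵒᵖ P] [SMulCommClass A Bᵐᵒᵖ P]
    [Module k P] [IsScalarTower k A P] [IsScalarTower k Bᵐᵒᵖ P] :
    ∃ Θ : (P →ₗ[Bᵐᵒᵖ] B) → (P →ₗ[A] A),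
      Function.Bijective Θ ∧
      (∀ f g : P →ₗ[Bᵐᵒᵖ] B, Θ (f + g) = Θ f + Θ g) ∧
      (∀ (b : B) (f : P →ₗ[Bᵐᵒᵖ] B), Θ (b • f) = b • Θ f) ∧
      (∀ (a : Aᵐᵒᵖ) (f : P →ₗ[Bᵐᵒᵖ] B), Θ (a • f) = a • Θ f) := by
  obtain ⟨φ, hφ, hφ₁, hφ₂⟩ := hA
  obtain ⟨ψ, hψ, hψ₁, hψ₂⟩ := hB
  let eA := traceCompEquiv (P := P) (isFrobeniusForm_apply_one hφ hφ₁)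
  let eB := traceCompEquiv (P := P) (isFrobeniusForm_op_apply_one hψ hψ₂)
  let Θ := eB.trans eA.symm
  have hΘ (f : P →ₗ[Bᵐᵒᵖ] B) (p : P) : φ 1 (Θ f p) = ψ 1 (f p) :=
    LinearMap.congr_fun (eA.apply_symm_apply (eB f)) p
  refine ⟨Θ, Θ.bijective, map_add Θ, fun b f => eA.injective (LinearMap.ext fun p => ?_),
    fun a f => eA.injective (LinearMap.ext fun p => ?_)⟩
  · change φ 1 (Θ (b • f) p) = φ 1 (Θ f (op b • p))
    rw [hΘ, hΘ, LinearMap.smul_apply, map_smul f, op_smul_eq_mul, smul_eq_mul,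
      one_apply_mul_comm hψ₁ hψ₂]
  · change φ 1 (Θ (a • f) p) = φ 1 (Θ f p * a.unop)
    rw [hΘ, one_apply_mul_comm hφ₁ hφ₂, ← smul_eq_mul, ← map_smul, hΘ]
    rfl

/-- Over a field `k`, if `A` and `B` are finite-dimensional symmetric
`k`-algebras, then every `k`-central, left and right finite projective bimodule `P` linking
`A` and `B` satisfies `Hom_B(P_B, B_B) ≅ Hom_A({}_A P, {}_A A)` as `B`-`A`-bimodules;
`P` is automatically a Frobenius bimodule. -/
theorem bimodule_over_symmetric_algebras_is_frobenius
    {k A B P : Type*} [Field k] [Ring A] [Algebra k A] [Ring B] [Algebra k B]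
    [FiniteDimensional k A] [FiniteDimensional k B]
    -- `A` is a symmetric algebra: `A ≅ A* = Hom_k(A, k)` as `A`-`A`-bimodules
    (hA : ∃ φ : A →ₗ[k] Module.Dual k A, Function.Bijective φ ∧
      (∀ a x y : A, φ (a * x) y = φ x (y * a)) ∧
      (∀ a x y : A, φ (x * a) y = φ x (a * y)))
    -- `B` is a symmetric algebra
    (hB : ∃ ψ : B →ₗ[k] Module.Dual k B, Function.Bijective ψ ∧
      (∀ b x y : B, ψ (b * x) y = ψ x (y * b)) ∧
      (∀ b x y : B, ψ (x * b) y = ψ x (b * y)))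
    [AddCommGroup P] [Module A P] [Module Bᵐᵒᵖ P] [SMulCommClass A Bᵐᵒᵖ P]
    [Module k P] [IsScalarTower k A P] [IsScalarTower k Bᵐᵒᵖ P]
    [Module.Finite A P] [Module.Projective A P]
    [Module.Finite Bᵐᵒᵖ P] [Module.Projective Bᵐᵒᵖ P] :
    ∃ Θ : (P →ₗ[Bᵐᵒᵖ] B) → (P →ₗ[A] A),
      Function.Bijective Θ ∧
      (∀ f g : P →ₗ[Bᵐᵒᵖ] B, Θ (f + g) = Θ f + Θ g) ∧
      (∀ (b : B) (f : P →ₗ[Bᵐᵒᵖ] B), Θ (b • f) = b • Θ f) ∧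
      (∀ (a : Aᵐᵒᵖ) (f : P →ₗ[Bᵐᵒᵖ] B), Θ (a • f) = a • Θ f) :=
  bimodule_over_symmetric_algebras_is_frobenius_general hA hB
end
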